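/- arXiv:1009.2354 — 4 statements merged into one kernel-verified Lean document; each statement's English description precedes it below -/
import Mathlib

section
/- For non-singular s (all s_i − s_j units, i ≠ j) and f the identity map, the generalized divided differences satisfy id^{⟨k⟩}(v₀,…,v_k; s₀,…,s_k) = v_k, where f^{⟨k⟩}(v;s) := Σ_{i=0}^{k} f(v₀ + Σ_{j=1}^{i} ∏_{ℓ=0}^{j−1}(s_i − s_ℓ)v_j)/∏_{j≠i}(s_i − s_j). -/
/-!
Expanding the inner sums of `gendd id` and exchanging the order of summation, the coefficient
of `v j` becomes `∑_{i ≥ j} w_i ∏_{l < j} (s_i - s_l)`, where `w_i = (∏_{l ≠ i} (s_i - s_l))⁻¹`;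
this is the sum of the barycentric weights of the nodes `s_j, …, s_k` alone. The sum `S(F)` of
the barycentric weights of a node set `F` is `1` for a single node and `0` for two or more, by the
divided-difference recursion `(x_b - x_a) S(F) = S(F \ {a}) - S(F \ {b})`, whose right-hand side
vanishes by induction on `#F`.
-/

/-- The generalized divided difference `f^⟨k⟩(v; s)` of a map `f : V → W`:
`∑_{i} (∏_{j ≠ i} (s i - s j))⁻¹ • f (v 0 + ∑_{1 ≤ j ≤ i} (∏_{ℓ < j} (s i - s ℓ)) • v j)`. -/
noncomputable def gendd {K V W : Type*} [CommRing K]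
    [AddCommGroup V] [Module K V] [AddCommGroup W] [Module K W]
    {k : ℕ} (f : V → W) (v : Fin (k + 1) → V) (s : Fin (k + 1) → K) : W :=
  ∑ i : Fin (k + 1),
    Ring.inverse (∏ j ∈ Finset.univ.erase i, (s i - s j)) •
      f (∑ j ∈ Finset.Iic i, (∏ ℓ ∈ Finset.Iio j, (s i - s ℓ)) • v j)

open Finset

section BarycentricWeights

variable {K ι : Type*} [CommRing K] [DecidableEq ι] (x : ι → K)

noncomputable def baryWeight (H : Finset ι) (i : ι) : K :=
  Ring.inverse (∏ l ∈ H.erase i, (x i - x l))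

variable {x}

lemma baryWeight_insert_of_ne {H : Finset ι} {c i : ι} (hc : c ∉ H) (hic : i ≠ c)
    (hu : IsUnit (x i - x c)) :
    baryWeight x (insert c H) i = Ring.inverse (x i - x c) * baryWeight x H i := by
  have hc' : c ∉ H.erase i := fun h => hc (mem_of_mem_erase h)
  rw [baryWeight, erase_insert_of_ne hic.symm, prod_insert hc', Ring.inverse_mul (.inl hu),
    mul_comm, baryWeight]

lemma baryWeight_union_mul_prod {A B : Finset ι} {i : ι} (hAB : Disjoint A B) (hi : i ∈ B)
    (hu : ∀ l ∈ A, IsUnit (x i - x l)) :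
    baryWeight x (A ∪ B) i * ∏ l ∈ A, (x i - x l) = baryWeight x B i := by
  have hiA : i ∉ A := disjoint_right.mp hAB hi
  rw [baryWeight, erase_union_distrib, erase_eq_of_notMem hiA,
    prod_union (disjoint_of_subset_right (erase_subset _ _) hAB),
    Ring.inverse_mul (.inl (IsUnit.prod_iff.mpr hu)), mul_assoc,
    Ring.inverse_mul_cancel _ (IsUnit.prod_iff.mpr hu), mul_one, baryWeight]

lemma sub_mul_sum_baryWeight_insert_insert {G : Finset ι} {a b : ι} (hab : a ≠ b)
    (ha : a ∉ G) (hb : b ∉ G)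
    (hx : (↑(insert a (insert b G)) : Set ι).Pairwise fun i j => IsUnit (x i - x j)) :
    (x b - x a) * ∑ i ∈ insert a (insert b G), baryWeight x (insert a (insert b G)) i =
      ∑ i ∈ insert b G, baryWeight x (insert b G) i -
        ∑ i ∈ insert a G, baryWeight x (insert a G) i := by
  have hmem : ∀ i ∈ G, i ∈ insert a (insert b G) := fun i hi =>
    mem_insert_of_mem (mem_insert_of_mem hi)
  have haF : a ∈ insert a (insert b G) := mem_insert_self _ _
  have hbF : b ∈ insert a (insert b G) := mem_insert_of_mem (mem_insert_self _ _)
  have ha' : a ∉ insert b G := by simp [hab, ha]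
  have hb' : b ∉ insert a G := by simp [hab.symm, hb]
  have hwa : baryWeight x (insert a (insert b G)) a =
      Ring.inverse (x a - x b) * baryWeight x (insert a G) a := by
    rw [insert_comm]; exact baryWeight_insert_of_ne hb' hab (hx haF hbF hab)
  have hwb : baryWeight x (insert a (insert b G)) b =
      Ring.inverse (x b - x a) * baryWeight x (insert b G) b :=
    baryWeight_insert_of_ne ha' hab.symm (hx hbF haF hab.symm)
  have hwG : ∀ i ∈ G, (x b - x a) * baryWeight x (insert a (insert b G)) i =
      baryWeight x (insert b G) i - baryWeight x (insert a G) i := by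
    intro i hi
    have hia : i ≠ a := ne_of_mem_of_not_mem hi ha
    have hib : i ≠ b := ne_of_mem_of_not_mem hi hb
    have hua := hx (hmem i hi) haF hia
    have hub := hx (hmem i hi) hbF hib
    rw [baryWeight_insert_of_ne ha' hia hua, baryWeight_insert_of_ne hb hib hub,
      baryWeight_insert_of_ne ha hia hua,
      ← sub_mul, Ring.inverse_sub_inverse (iff_of_true hub hua)]
    ring
  have hneg : (x b - x a) * Ring.inverse (x a - x b) = -1 := by
    rw [← neg_sub, neg_mul, Ring.mul_inverse_cancel _ (hx haF hbF hab)]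
  have hpos : (x b - x a) * Ring.inverse (x b - x a) = 1 :=
    Ring.mul_inverse_cancel _ (hx hbF haF hab.symm)
  rw [sum_insert ha', sum_insert hb, sum_insert hb, sum_insert ha, hwa, hwb, mul_add, mul_add,
    mul_sum, sum_congr rfl hwG, sum_sub_distrib, ← mul_assoc, ← mul_assoc, hneg, hpos]
  ring

theorem sum_baryWeight {H : Finset ι} (hH : H.Nonempty)
    (hx : (↑H : Set ι).Pairwise fun i j => IsUnit (x i - x j)) :
    ∑ i ∈ H, baryWeight x H i = if #H = 1 then 1 else 0 := by
  induction H using Finset.strongInduction with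
  | H H ih =>
  by_cases h1 : #H = 1
  · obtain ⟨a, rfl⟩ := card_eq_one.mp h1
    simp [baryWeight]
  rw [if_neg h1]
  have h2 : 1 < #H := by have := hH.card_pos; omega
  obtain ⟨a, ha, b, hb, hab⟩ := one_lt_card.mp h2
  set G := (H.erase a).erase b
  have hHa : H.erase a = insert b G := (insert_erase (mem_erase.mpr ⟨hab.symm, hb⟩)).symm
  have hHb : H.erase b = insert a G := by
    rw [show G = (H.erase b).erase a from erase_right_comm,
      insert_erase (mem_erase.mpr ⟨hab, ha⟩)]
  have hH' : H = insert a (insert b G) := by rw [← hHa, insert_erase ha]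
  have hrec := sub_mul_sum_baryWeight_insert_insert hab
    (fun h => (mem_erase.mp (mem_of_mem_erase h)).1 rfl) (fun h => (mem_erase.mp h).1 rfl)
    (hH' ▸ hx)
  have hsum_erase : ∀ c ∈ H, ∑ i ∈ H.erase c, baryWeight x (H.erase c) i =
      if #H - 1 = 1 then 1 else 0 := fun c hc => by
    have hne : (H.erase c).Nonempty := by rw [← card_pos, card_erase_of_mem hc]; omega
    rw [ih _ (erase_ssubset hc) hne (hx.mono (by simp)), card_erase_of_mem hc]
  rw [← hH', ← hHa, ← hHb, hsum_erase a ha, hsum_erase b hb, sub_self] at hrec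
  exact (IsUnit.mul_right_eq_zero (hx hb ha hab.symm)).mp hrec

end BarycentricWeights

section LinearOrder

variable {K ι : Type*} [CommRing K] [LinearOrder ι] [Fintype ι] [LocallyFiniteOrderTop ι]
  [LocallyFiniteOrderBot ι]

lemma sum_Iic_comm {M : Type*} [AddCommMonoid M] (f : ι → ι → M) :
    ∑ i, ∑ j ∈ Iic i, f i j = ∑ j, ∑ i ∈ Ici j, f i j :=
  sum_comm' (by simp)

lemma sum_baryWeight_univ_mul_prod_Iio {x : ι → K} (hx : Pairwise fun i j => IsUnit (x i - x j))
    (j : ι) :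
    ∑ i ∈ Ici j, baryWeight x univ i * ∏ l ∈ Iio j, (x i - x l) =
      if #(Ici j) = 1 then 1 else 0 := by
  have hunion : Iio j ∪ Ici j = univ := by ext l; simp [lt_or_ge]
  rw [← sum_baryWeight ⟨j, mem_Ici.mpr le_rfl⟩ (hx.set_pairwise _)]
  refine sum_congr rfl fun i hi => ?_
  rw [← hunion]
  exact baryWeight_union_mul_prod (disjoint_left.mpr fun l hl hl' =>
    (mem_Iio.mp hl).not_ge (mem_Ici.mp hl')) hi
    fun l hl => hx ((mem_Iio.mp hl).trans_le (mem_Ici.mp hi)).ne'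

end LinearOrder

theorem stmt15 {K V : Type*} [CommRing K] [AddCommGroup V] [Module K V]
    {k : ℕ} (v : Fin (k + 1) → V) (s : Fin (k + 1) → K)
    (hs : ∀ i j, i ≠ j → IsUnit (s i - s j)) :
    gendd (id : V → V) v s = v (Fin.last k) := by
  calc gendd id v s
        = ∑ j, (∑ i ∈ Ici j, baryWeight s univ i * ∏ l ∈ Iio j, (s i - s l)) • v j := by
        simp only [gendd, baryWeight, id, smul_sum, smul_smul, sum_smul]
        exact sum_Iic_comm _
    _ = ∑ j, (if j = Fin.last k then 1 else 0 : K) • v j := by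
        refine sum_congr rfl fun j _ => ?_
        have hlast : k + 1 - (j : ℕ) = 1 ↔ j = Fin.last k := by
          rw [Fin.ext_iff, Fin.val_last]; omega
        rw [sum_baryWeight_univ_mul_prod_Iio hs, Fin.card_Ici, if_congr hlast rfl rfl]
    _ = v (Fin.last k) := by simp [ite_smul]
end

section
/- Generalized divided differences satisfy the recursion f^{⟨k+1⟩}(v₀,…,v_{k+1}; s₀,…,s_{k+1}) = (f^{⟨k⟩}(v₀,…,v_k; s₀,…,s_k) − f^{⟨k⟩}(v₀,…,v_{k−1}, v_k + (s_{k+1}−s_k)v_{k+1}; s₀,…,s_{k−1}, s_{k+1}))/(s_k − s_{k+1}), for non-singular s. -/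
/-!
Split off the last two nodes and vectors: `s = (t, a, b)`, `v = (u, x, y)`. The weight of an inner
node `tᵢ` in `f^⟨k+1⟩` splits by partial fractions,
`1/((tᵢ - a)(tᵢ - b)) = (1/(tᵢ - a) - 1/(tᵢ - b)) / (a - b)`,
into its weights in the two divided differences of order `k`, and the argument of `f` at `tᵢ` is
the same in all three sums, as it only involves nodes and vectors up to index `i`. The argument
at the last node `b` is the Newton form `Σⱼ ∏_{ℓ<j} (b - sₗ) vⱼ`, whose last two terms
`P x + P (b - a) y` with `P = ∏ₗ (b - tₗ)` merge into the last term `P (x + (b - a) y)` of the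
second divided difference.
-/

open Finset

theorem Fin.prod_univ_erase_castSucc {M : Type*} [CommMonoid M] {n : ℕ}
    (g : Fin (n + 1) → M) (i : Fin n) :
    ∏ j ∈ univ.erase i.castSucc, g j = (∏ j ∈ univ.erase i, g j.castSucc) * g (last n) := by
  simp only [← filter_ne', prod_filter, Fin.prod_univ_castSucc, Fin.castSucc_inj,
    (Fin.castSucc_lt_last i).ne', ne_eq, not_false_eq_true, if_true]

theorem Fin.prod_univ_erase_last {M : Type*} [CommMonoid M] {n : ℕ} (g : Fin (n + 1) → M) :
    ∏ j ∈ univ.erase (last n), g j = ∏ j : Fin n, g j.castSucc := by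
  simp [← filter_ne', prod_filter, Fin.prod_univ_castSucc, (Fin.castSucc_lt_last _).ne]

theorem Fin.exists_eq_snoc_snoc {α : Type*} {n : ℕ} (q : Fin (n + 2) → α) :
    ∃ p a b, q = Fin.snoc (Fin.snoc p a) b :=
  ⟨_, _, _, by rw [Fin.snoc_init_self, Fin.snoc_init_self]⟩

theorem Ring.inverse_neg {R : Type*} [Ring R] (a : R) : Ring.inverse (-a) = -Ring.inverse a := by
  by_cases h : IsUnit a
  · lift a to Rˣ using h
    rw [← Units.val_neg, Ring.inverse_unit, Ring.inverse_unit, inv_neg, Units.val_neg]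
  · rw [Ring.inverse_non_unit _ h, Ring.inverse_non_unit _ (by rwa [IsUnit.neg_iff]), neg_zero]

theorem Ring.inverse_mul_inverse_eq_of_isUnit_sub {R : Type*} [CommRing R] {u w : R}
    (hu : IsUnit u) (hw : IsUnit w) (hwu : IsUnit (w - u)) :
    Ring.inverse u * Ring.inverse w = Ring.inverse (w - u) * (Ring.inverse u - Ring.inverse w) := by
  have h1 := Ring.mul_inverse_cancel _ hu
  have h2 := Ring.mul_inverse_cancel _ hw
  have h3 := Ring.mul_inverse_cancel _ hwu
  linear_combination (Ring.inverse (w - u) * Ring.inverse u) * h2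
    - (Ring.inverse (w - u) * Ring.inverse w) * h1 - (Ring.inverse u * Ring.inverse w) * h3

section NewtonForm

variable {K V : Type*} [CommRing K] [AddCommGroup V] [Module K V] {n : ℕ}

noncomputable def divDiffWeight (s : Fin n → K) (i : Fin n) : K :=
  Ring.inverse (∏ j ∈ univ.erase i, (s i - s j))

def newtonEval (v : Fin n → V) (s : Fin n → K) (c : K) : V :=
  ∑ j, (∏ ℓ ∈ Iio j, (c - s ℓ)) • v j

def newtonPoint (v : Fin n → V) (s : Fin n → K) (i : Fin n) : V :=
  ∑ j ∈ Iic i, (∏ ℓ ∈ Iio j, (s i - s ℓ)) • v j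

theorem gendd_eq_sum {W : Type*} [AddCommGroup W] [Module K W] (f : V → W)
    (v : Fin (n + 1) → V) (s : Fin (n + 1) → K) :
    gendd f v s = ∑ i, divDiffWeight s i • f (newtonPoint v s i) :=
  rfl

theorem divDiffWeight_snoc_castSucc (s : Fin n → K) (a : K) (i : Fin n) :
    divDiffWeight (Fin.snoc s a) i.castSucc = divDiffWeight s i * Ring.inverse (s i - a) := by
  simp [divDiffWeight, Fin.prod_univ_erase_castSucc, Ring.mul_inverse_rev, mul_comm]

theorem divDiffWeight_snoc_last (s : Fin n → K) (a : K) :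
    divDiffWeight (Fin.snoc s a) (Fin.last n) = Ring.inverse (∏ j, (a - s j)) := by
  simp [divDiffWeight, Fin.prod_univ_erase_last]

theorem newtonPoint_last (v : Fin (n + 1) → V) (s : Fin (n + 1) → K) :
    newtonPoint v s (Fin.last n) = newtonEval v s (s (Fin.last n)) := by
  have h : Iic (Fin.last n) = univ := by ext; simp [Fin.le_last]
  rw [newtonPoint, newtonEval, h]

theorem newtonEval_snoc (v : Fin n → V) (x : V) (s : Fin n → K) (a c : K) :
    newtonEval (Fin.snoc v x) (Fin.snoc s a) c =
      newtonEval v s c + (∏ ℓ, (c - s ℓ)) • x := by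
  simp only [newtonEval, Fin.sum_univ_castSucc, Fin.Iio_castSucc, Fin.Iio_last_eq_map, prod_map,
    Fin.coe_castSuccEmb, Fin.snoc_castSucc, Fin.snoc_last]

theorem newtonPoint_snoc_castSucc (v : Fin n → V) (x : V) (s : Fin n → K) (a : K) (i : Fin n) :
    newtonPoint (Fin.snoc v x) (Fin.snoc s a) i.castSucc = newtonPoint v s i := by
  simp only [newtonPoint, ← Fin.map_castSuccEmb_Iic, sum_map, Fin.Iio_castSucc, prod_map,
    Fin.coe_castSuccEmb, Fin.snoc_castSucc]

theorem newtonEval_snoc_snoc (u : Fin n → V) (x y : V) (t : Fin n → K) (a b c : K) :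
    newtonEval (Fin.snoc (Fin.snoc u x) y) (Fin.snoc (Fin.snoc t a) b) c =
      newtonEval (Fin.snoc u (x + (c - a) • y)) (Fin.snoc t b) c := by
  simp only [newtonEval_snoc, Fin.prod_univ_castSucc, Fin.snoc_castSucc, Fin.snoc_last,
    smul_add, mul_smul, add_assoc]

theorem divDiffWeight_snoc_snoc_castSucc (t : Fin n → K) (a b : K) (i : Fin n)
    (ha : IsUnit (t i - a)) (hb : IsUnit (t i - b)) (hab : IsUnit (a - b)) :
    divDiffWeight (Fin.snoc (Fin.snoc t a) b) i.castSucc.castSucc =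
      Ring.inverse (a - b) *
        (divDiffWeight (Fin.snoc t a) i.castSucc - divDiffWeight (Fin.snoc t b) i.castSucc) := by
  have hba : (t i - b) - (t i - a) = a - b := by ring
  simp only [divDiffWeight_snoc_castSucc, Fin.snoc_castSucc, mul_assoc,
    Ring.inverse_mul_inverse_eq_of_isUnit_sub ha hb (hba ▸ hab), hba]
  ring

theorem divDiffWeight_snoc_snoc_last (t : Fin n → K) (a b : K) :
    divDiffWeight (Fin.snoc (Fin.snoc t a) b) (Fin.last (n + 1)) =
      -(Ring.inverse (a - b) * divDiffWeight (Fin.snoc t b) (Fin.last n)) := by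
  simp only [divDiffWeight_snoc_last, Fin.prod_univ_castSucc, Fin.snoc_castSucc, Fin.snoc_last,
    Ring.mul_inverse_rev, ← neg_sub a b, Ring.inverse_neg, neg_mul]

theorem gendd_snoc_snoc {W : Type*} [AddCommGroup W] [Module K W] (f : V → W) (u : Fin n → V)
    (x y : V) (t : Fin n → K) (a b : K) (ha : ∀ i, IsUnit (t i - a))
    (hb : ∀ i, IsUnit (t i - b)) (hab : IsUnit (a - b)) :
    gendd f (Fin.snoc (Fin.snoc u x) y) (Fin.snoc (Fin.snoc t a) b) =
      Ring.inverse (a - b) •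
        (gendd f (Fin.snoc u x) (Fin.snoc t a) -
          gendd f (Fin.snoc u (x + (b - a) • y)) (Fin.snoc t b)) := by
  simp only [gendd_eq_sum, Fin.sum_univ_castSucc (n := n + 1), Fin.sum_univ_castSucc (n := n),
    divDiffWeight_snoc_snoc_castSucc t a b _ (ha _) (hb _) hab, divDiffWeight_snoc_snoc_last,
    divDiffWeight_snoc_castSucc (Fin.snoc t a) b (Fin.last n), Fin.snoc_last,
    newtonPoint_snoc_castSucc, newtonPoint_last, newtonEval_snoc_snoc]
  simp only [smul_sub, smul_add, smul_sum, mul_smul, sub_smul, neg_smul, sum_sub_distrib]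
  module

end NewtonForm

theorem stmt16 {K V W : Type*} [CommRing K]
    [AddCommGroup V] [Module K V] [AddCommGroup W] [Module K W]
    {k : ℕ} (f : V → W) (v : Fin (k + 2) → V) (s : Fin (k + 2) → K)
    (hs : ∀ i j, i ≠ j → IsUnit (s i - s j)) :
    gendd f v s =
      Ring.inverse (s (Fin.castSucc (Fin.last k)) - s (Fin.last (k + 1))) •
        (gendd f (Fin.init v) (Fin.init s) -
          gendd f
            (Function.update (Fin.init v) (Fin.last k)
              (v (Fin.castSucc (Fin.last k)) +
                (s (Fin.last (k + 1)) - s (Fin.castSucc (Fin.last k))) •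
                  v (Fin.last (k + 1))))
            (Function.update (Fin.init s) (Fin.last k) (s (Fin.last (k + 1))))) := by
  obtain ⟨u, x, y, rfl⟩ := Fin.exists_eq_snoc_snoc v
  obtain ⟨t, a, b, rfl⟩ := Fin.exists_eq_snoc_snoc s
  simp only [Fin.init_snoc, Fin.snoc_last, Fin.snoc_castSucc, Fin.update_snoc_last]
  refine gendd_snoc_snoc f u x y t a b (fun i => ?_) (fun i => ?_) ?_
  · simpa using hs (Fin.castSucc (Fin.castSucc i)) (Fin.castSucc (Fin.last k)) (by simp)
  · simpa using hs (Fin.castSucc (Fin.castSucc i)) (Fin.last (k + 1)) (by simp)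
  · simpa using hs (Fin.castSucc (Fin.last k)) (Fin.last (k + 1)) (by simp)
end

section
/- The limited expansion holds: for non-singular s and any map f, f(v₀ + Σ_{j=1}^{k} ∏_{ℓ=0}^{j−1}(s_k − s_ℓ)v_j) = f(v₀) + Σ_{j=1}^{k} ∏_{ℓ=0}^{j−1}(s_k − s_ℓ)·f^{⟨j⟩}(v₀,…,v_j; s₀,…,s_j). -/
open Finset
open scoped Ring

theorem Fin.exists_eq_comp_val {α : Type*} {n : ℕ} (g : Fin (n + 1) → α) :
    ∃ h : ℕ → α, g = fun i : Fin (n + 1) => h i :=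
  ⟨Function.extend Fin.val g fun _ => g 0,
    funext fun i => (Fin.val_injective.extend_apply g _ i).symm⟩

section Newton

variable {K M : Type*} [CommRing K] [AddCommGroup M] [Module K M]

def newtonSum (t : ℕ → K) (a : ℕ → M) (n : ℕ) (c : K) : M :=
  ∑ m ∈ range (n + 1), (∏ ℓ ∈ range m, (c - t ℓ)) • a m

noncomputable def dividedDiff (t : ℕ → K) (x : ℕ → M) (n : ℕ) : M :=
  ∑ i ∈ range (n + 1), (∏ m ∈ (range (n + 1)).erase i, (t i - t m))⁻¹ʳ • x i

theorem sum_Ico_prod_mul_inverse_prod_erase (t : ℕ → K) (c : K) {i n : ℕ} (hin : i ≤ n)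
    (ht : ∀ m ≤ n, m ≠ i → IsUnit (t i - t m)) :
    ∑ j ∈ Ico i (n + 1), (∏ ℓ ∈ range j, (c - t ℓ)) *
        (∏ m ∈ (range (j + 1)).erase i, (t i - t m))⁻¹ʳ =
      (∏ ℓ ∈ (range (n + 1)).erase i, (c - t ℓ)) *
        (∏ m ∈ (range (n + 1)).erase i, (t i - t m))⁻¹ʳ := by
  induction n, hin using Nat.le_induction with
  | base => rw [Nat.Ico_succ_singleton, sum_singleton, range_add_one, erase_insert (by simp)]
  | succ n hin ih =>
    have hinsert : (range (n + 1 + 1)).erase i = insert (n + 1) ((range (n + 1)).erase i) := by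
      rw [range_add_one, erase_insert_of_ne (by omega)]
    have hnot : n + 1 ∉ (range (n + 1)).erase i := by simp
    rw [sum_Ico_succ_top (by omega), ih fun m hm => ht m (by omega), hinsert,
      prod_insert hnot, prod_insert hnot, Ring.mul_inverse_rev,
      ← mul_prod_erase (range (n + 1)) (fun ℓ => c - t ℓ) (by simp; omega)]
    set P := ∏ ℓ ∈ (range (n + 1)).erase i, (c - t ℓ)
    set D := ∏ m ∈ (range (n + 1)).erase i, (t i - t m)
    have hu : (t i - t (n + 1)) * (t i - t (n + 1))⁻¹ʳ = 1 :=
      Ring.mul_inverse_cancel _ (ht (n + 1) le_rfl (by omega))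
    linear_combination -(P * D⁻¹ʳ) * hu

theorem sum_Ico_prod_mul_inverse_prod_erase_self (t : ℕ → K) {i n : ℕ} (hin : i ≤ n)
    (ht : ∀ m ≤ n, m ≠ i → IsUnit (t i - t m)) :
    ∑ j ∈ Ico i (n + 1), (∏ ℓ ∈ range j, (t n - t ℓ)) *
        (∏ m ∈ (range (j + 1)).erase i, (t i - t m))⁻¹ʳ = if i = n then 1 else 0 := by
  rw [sum_Ico_prod_mul_inverse_prod_erase t (t n) hin ht]
  split_ifs with h
  · subst h
    refine Ring.mul_inverse_cancel _ (IsUnit.prod_iff.mpr fun m hm => ht m ?_ ?_) <;>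
      simp_all
  · rw [prod_eq_zero (i := n) (by simp; omega) (sub_self _), zero_mul]

theorem newtonSum_dividedDiff_self (t : ℕ → K) (x : ℕ → M) (n : ℕ)
    (ht : ∀ i ≤ n, ∀ j ≤ n, i ≠ j → IsUnit (t i - t j)) :
    newtonSum t (dividedDiff t x) n (t n) = x n := by
  set c : ℕ → ℕ → K := fun i j =>
    (∏ ℓ ∈ range j, (t n - t ℓ)) * (∏ m ∈ (range (j + 1)).erase i, (t i - t m))⁻¹ʳ
  calc newtonSum t (dividedDiff t x) n (t n)
      = ∑ j ∈ range (n + 1), ∑ i ∈ range (j + 1), c i j • x i := by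
        simp only [newtonSum, dividedDiff, smul_sum, smul_smul, c]
    _ = ∑ i ∈ range (n + 1), (∑ j ∈ Ico i (n + 1), c i j) • x i := by
        simpa only [← range_eq_Ico, sum_smul] using
          (sum_Ico_Ico_comm 0 (n + 1) fun i j => c i j • x i).symm
    _ = ∑ i ∈ range (n + 1), (if i = n then x i else 0) := by
        refine sum_congr rfl fun i hi => ?_
        have hi : i ≤ n := Nat.lt_succ_iff.mp (mem_range.mp hi)
        rw [sum_Ico_prod_mul_inverse_prod_erase_self t hi
          fun m hm hmi => ht i hi m hm (Ne.symm hmi)]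
        split_ifs <;> simp
    _ = x n := by simp

theorem Fin.sum_Iic_eq_newtonSum {n : ℕ} (i : Fin n) (t : ℕ → K) (a : ℕ → M) (c : K) :
    ∑ j ∈ Iic i, (∏ ℓ ∈ Iio j, (c - t ℓ)) • a j = newtonSum t a i c := by
  rw [newtonSum, Nat.range_succ_eq_Iic, ← Fin.map_valEmbedding_Iic, sum_map]
  refine sum_congr rfl fun j _ => ?_
  rw [Fin.valEmbedding_apply, ← Nat.Iio_eq_range, ← Fin.map_valEmbedding_Iio, prod_map]
  rfl

theorem Fin.sum_univ_eq_newtonSum {n : ℕ} (t : ℕ → K) (a : ℕ → M) (c : K) :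
    ∑ j : Fin (n + 1), (∏ ℓ ∈ Iio j, (c - t ℓ)) • a j = newtonSum t a n c := by
  have h := Fin.sum_Iic_eq_newtonSum (Fin.last n) t a c
  rwa [Fin.val_last, ← Fin.top_eq_last, Iic_top] at h

end Newton

theorem gendd_eq_dividedDiff {K V W : Type*} [CommRing K]
    [AddCommGroup V] [Module K V] [AddCommGroup W] [Module K W]
    (f : V → W) (t : ℕ → K) (w : ℕ → V) (n : ℕ) :
    gendd f (fun i : Fin (n + 1) => w i) (fun i => t i) =
      dividedDiff t (fun i => f (newtonSum t w i (t i))) n := by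
  rw [gendd, dividedDiff, ← Fin.sum_univ_eq_sum_range]
  refine sum_congr rfl fun i _ => ?_
  have herase : (univ.erase i).map Fin.valEmbedding = (range (n + 1)).erase (i : ℕ) := by
    rw [map_erase, Fin.map_valEmbedding_univ, Nat.Iio_eq_range]
    rfl
  rw [Fin.sum_Iic_eq_newtonSum, ← herase, prod_map]
  rfl

theorem stmt17 {K V W : Type*} [CommRing K]
    [AddCommGroup V] [Module K V] [AddCommGroup W] [Module K W]
    {k : ℕ} (f : V → W) (v : Fin (k + 1) → V) (s : Fin (k + 1) → K)
    (hs : ∀ i j, i ≠ j → IsUnit (s i - s j)) :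
    f (∑ j : Fin (k + 1), (∏ ℓ ∈ Finset.Iio j, (s (Fin.last k) - s ℓ)) • v j) =
      ∑ j : Fin (k + 1), (∏ ℓ ∈ Finset.Iio j, (s (Fin.last k) - s ℓ)) •
        gendd f (fun i : Fin ((j : ℕ) + 1) => v (Fin.castLE j.isLt i))
          (fun i : Fin ((j : ℕ) + 1) => s (Fin.castLE j.isLt i)) := by
  obtain ⟨t, rfl⟩ := Fin.exists_eq_comp_val s
  obtain ⟨w, rfl⟩ := Fin.exists_eq_comp_val v
  have ht : ∀ i ≤ k, ∀ j ≤ k, i ≠ j → IsUnit (t i - t j) := fun i hi j hj hij =>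
    hs ⟨i, by omega⟩ ⟨j, by omega⟩ (by simpa [Fin.ext_iff] using hij)
  simp only [Fin.val_castLE, Fin.val_last, gendd_eq_dividedDiff, Fin.sum_univ_eq_newtonSum]
  rw [newtonSum_dividedDiff_self t _ k ht]
end

section
/- Let K be a commutative ring, and define A = K[X₁,X₂]/(X₁² − t₁X₁, X₂² − t₂X₂ − t₁₂X₁X₂) for t₁, t₂, t₁₂ ∈ K. Then A is a free K-module of rank 4 with basis the classes of 1, X₁, X₂, X₁X₂, and the relations X₂·(X₁X₂) = (t₂ + t₁t₁₂)·X₁X₂ and (X₁X₂)² = (t₁t₂ + t₁²t₁₂)·X₁X₂ hold in A. -/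
/-!
Writing `x, y` for the classes of `X₁, X₂`, the relations `x² = t₁x`, `y² = t₂y + t₁₂xy` show that
the span of `1, x, y, xy` is stable under multiplication by `x` and `y`, hence is all of `A`.
For independence, map `A` to the iterated extension `K[α]/(α² − t₁α)`, then adjoin `β` with
`β² = (t₂ + t₁₂α)β`: both polynomials are monic quadratics, so `1, α` and `1, β` are bases at
each step and `1, α, β, αβ` is a basis of the tower.
-/

open Polynomial in
theorem AdjoinRoot.linearIndependent_one_root {R : Type*} [CommRing R] {g : R[X]}
    (hg : g.Monic) (hdeg : 1 < g.natDegree) :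
    LinearIndependent R ![1, AdjoinRoot.root g] := by
  rw [LinearIndependent.pair_iff]
  intro s t hst
  have hdvd : g ∣ C t * X + C s := by
    rw [← AdjoinRoot.mk_eq_zero, ← hst]
    simp [Algebra.smul_def, add_comm]
  have hzero : C t * X + C s = 0 := by
    by_contra hne
    exact hg.not_dvd_of_natDegree_lt hne (natDegree_linear_le.trans_lt hdeg) hdvd
  exact ⟨by simpa using congr_arg (coeff · 0) hzero, by simpa using congr_arg (coeff · 1) hzero⟩

theorem LinearIndependent.one_pair_tower {R S A : Type*} [CommSemiring R] [CommSemiring S]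
    [Semiring A] [Algebra R S] [Algebra S A] [Algebra R A] [IsScalarTower R S A] {a : S} {b : A}
    (ha : LinearIndependent R ![1, a]) (hb : LinearIndependent S ![1, b]) :
    LinearIndependent R ![1, algebraMap S A a, b, algebraMap S A a * b] := by
  refine (linearIndependent_equiv' ((Equiv.prodComm _ _).trans finProdFinEquiv) ?_).mp
    (linearIndependent_smul ha hb)
  funext ⟨i, j⟩
  fin_cases i <;> fin_cases j <;> simp [finProdFinEquiv, Algebra.smul_def]

section QuadraticExtension

open Polynomial

variable {R : Type*} [CommRing R] (a : R)

theorem AdjoinRoot.root_sq_of_X_sq_sub_C_mul_X :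
    AdjoinRoot.root (X ^ 2 - C a * X : R[X]) ^ 2 = a • AdjoinRoot.root _ := by
  have h := AdjoinRoot.eval₂_root (X ^ 2 - C a * X)
  rw [eval₂_sub, eval₂_pow, eval₂_mul, eval₂_C, eval₂_X, sub_eq_zero] at h
  rwa [Algebra.smul_def]

theorem AdjoinRoot.linearIndependent_one_root_of_X_sq_sub_C_mul_X [Nontrivial R] :
    LinearIndependent R ![1, AdjoinRoot.root (X ^ 2 - C a * X : R[X])] :=
  AdjoinRoot.linearIndependent_one_root (by monicity!) <| by
    rw [show (X ^ 2 - C a * X : R[X]).natDegree = 2 by compute_degree!]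
    norm_num

end QuadraticExtension

section Relations

variable {K : Type*} [CommRing K] (t₁ t₂ t₁₂ : K)

structure QuadRels {S : Type*} [CommSemiring S] [Algebra K S] (x y : S) : Prop where
  sq_left : x ^ 2 = t₁ • x
  sq_right : y ^ 2 = t₂ • y + t₁₂ • (x * y)

namespace QuadRels

variable {t₁ t₂ t₁₂} {S : Type*} [CommSemiring S] [Algebra K S] {x y : S}

theorem left_mul_mul (h : QuadRels t₁ t₂ t₁₂ x y) : x * (x * y) = t₁ • (x * y) := by
  rw [← mul_assoc, ← sq, h.sq_left, smul_mul_assoc]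

theorem right_mul_mul (h : QuadRels t₁ t₂ t₁₂ x y) :
    y * (x * y) = (t₂ + t₁ * t₁₂) • (x * y) :=
  calc y * (x * y) = x * y ^ 2 := by ring
    _ = t₂ • (x * y) + t₁₂ • (x * (x * y)) := by
      rw [h.sq_right, mul_add, mul_smul_comm, mul_smul_comm]
    _ = (t₂ + t₁ * t₁₂) • (x * y) := by
      rw [h.left_mul_mul, smul_smul, add_smul, mul_comm t₁₂]

theorem mul_sq (h : QuadRels t₁ t₂ t₁₂ x y) :
    (x * y) ^ 2 = (t₁ * t₂ + t₁ ^ 2 * t₁₂) • (x * y) :=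
  calc (x * y) ^ 2 = x * (y * (x * y)) := by ring
    _ = (t₁ * t₂ + t₁ ^ 2 * t₁₂) • (x * y) := by
      rw [h.right_mul_mul, mul_smul_comm, h.left_mul_mul, smul_smul]
      congr 1; ring

end QuadRels

section Model

open Polynomial

abbrev Adjoin₁ : Type _ := AdjoinRoot (X ^ 2 - C t₁ * X : K[X])

abbrev Adjoin₂ : Type _ :=
  AdjoinRoot (X ^ 2 - C (algebraMap K (Adjoin₁ t₁) t₂ +
    algebraMap K (Adjoin₁ t₁) t₁₂ * AdjoinRoot.root _) * X)

theorem linearIndependent_adjoin₂ [Nontrivial K] :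
    LinearIndependent K ![1, algebraMap (Adjoin₁ t₁) (Adjoin₂ t₁ t₂ t₁₂) (AdjoinRoot.root _),
      AdjoinRoot.root _, algebraMap (Adjoin₁ t₁) (Adjoin₂ t₁ t₂ t₁₂) (AdjoinRoot.root _) *
        AdjoinRoot.root _] := by
  have h₁ := AdjoinRoot.linearIndependent_one_root_of_X_sq_sub_C_mul_X t₁
  have : Nontrivial (Adjoin₁ t₁) := nontrivial_of_ne _ _ (h₁.ne_zero 0)
  exact h₁.one_pair_tower (AdjoinRoot.linearIndependent_one_root_of_X_sq_sub_C_mul_X _)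

theorem quadRels_adjoin₂ :
    QuadRels t₁ t₂ t₁₂ (algebraMap (Adjoin₁ t₁) (Adjoin₂ t₁ t₂ t₁₂) (AdjoinRoot.root _))
      (AdjoinRoot.root _) where
  sq_left := by
    rw [← map_pow, AdjoinRoot.root_sq_of_X_sq_sub_C_mul_X, Algebra.smul_def, Algebra.smul_def,
      map_mul, ← IsScalarTower.algebraMap_apply]
  sq_right := by
    have h := AdjoinRoot.root_sq_of_X_sq_sub_C_mul_X
      (algebraMap K (Adjoin₁ t₁) t₂ + algebraMap K (Adjoin₁ t₁) t₁₂ * AdjoinRoot.root _)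
    simp only [Algebra.smul_def, IsScalarTower.algebraMap_apply K (Adjoin₁ t₁) (Adjoin₂ t₁ t₂ t₁₂),
      map_add, map_mul] at h ⊢
    linear_combination h

end Model

section Presentation

open MvPolynomial

noncomputable def relIdeal : Ideal (MvPolynomial (Fin 2) K) :=
  Ideal.span {X 0 ^ 2 - C t₁ * X 0, X 1 ^ 2 - C t₂ * X 1 - C t₁₂ * (X 0 * X 1)}

variable {t₁ t₂ t₁₂} {S : Type*} [CommRing S] [Algebra K S] {x y : S}

theorem quadRels_iff_relIdeal_le_ker :
    QuadRels t₁ t₂ t₁₂ x y ↔ relIdeal t₁ t₂ t₁₂ ≤ RingHom.ker (aeval ![x, y]) := by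
  rw [relIdeal, Ideal.span_le, Set.insert_subset_iff, Set.singleton_subset_iff]
  simp only [SetLike.mem_coe, RingHom.mem_ker, map_sub, map_add, map_mul, map_pow, aeval_X,
    aeval_C, Matrix.cons_val_zero, Matrix.cons_val_one, sub_sub, sub_eq_zero, ← Algebra.smul_def]
  exact ⟨fun h => ⟨h.1, h.2⟩, fun h => ⟨h.1, h.2⟩⟩

theorem quadRels_mk :
    QuadRels t₁ t₂ t₁₂ (Ideal.Quotient.mk (relIdeal t₁ t₂ t₁₂) (X 0))
      (Ideal.Quotient.mk (relIdeal t₁ t₂ t₁₂) (X 1)) := by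
  have : aeval ![Ideal.Quotient.mk (relIdeal t₁ t₂ t₁₂) (X 0),
      Ideal.Quotient.mk (relIdeal t₁ t₂ t₁₂) (X 1)] = Ideal.Quotient.mkₐ K _ := by
    ext i; fin_cases i <;> simp
  rw [quadRels_iff_relIdeal_le_ker, this]
  exact (Ideal.Quotient.mkₐ_ker K _).ge

noncomputable def QuadRels.lift (h : QuadRels t₁ t₂ t₁₂ x y) :
    MvPolynomial (Fin 2) K ⧸ relIdeal t₁ t₂ t₁₂ →ₐ[K] S :=
  Ideal.Quotient.liftₐ _ (aeval ![x, y]) fun _ hp => quadRels_iff_relIdeal_le_ker.mp h hp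

theorem QuadRels.lift_mk (h : QuadRels t₁ t₂ t₁₂ x y) (p : MvPolynomial (Fin 2) K) :
    h.lift (Ideal.Quotient.mk _ p) = aeval ![x, y] p :=
  rfl

theorem QuadRels.linearIndependent_mk (h : QuadRels t₁ t₂ t₁₂ x y)
    (hli : LinearIndependent K ![1, x, y, x * y]) :
    LinearIndependent K ![1, Ideal.Quotient.mk (relIdeal t₁ t₂ t₁₂) (X 0),
      Ideal.Quotient.mk (relIdeal t₁ t₂ t₁₂) (X 1),
      Ideal.Quotient.mk (relIdeal t₁ t₂ t₁₂) (X 0) *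
        Ideal.Quotient.mk (relIdeal t₁ t₂ t₁₂) (X 1)] := by
  refine LinearIndependent.of_comp h.lift.toLinearMap ?_
  convert hli using 1
  funext i
  fin_cases i <;> simp [QuadRels.lift_mk]

theorem QuadRels.span_eq_top {f : MvPolynomial (Fin 2) K →ₐ[K] S} (hf : Function.Surjective f)
    (h : QuadRels t₁ t₂ t₁₂ (f (X 0)) (f (X 1))) :
    Submodule.span K (Set.range ![1, f (X 0), f (X 1), f (X 0) * f (X 1)]) = ⊤ := by
  set M := Submodule.span K (Set.range ![1, f (X 0), f (X 1), f (X 0) * f (X 1)])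
  have mem (j : Fin 4) : ![1, f (X 0), f (X 1), f (X 0) * f (X 1)] j ∈ M :=
    Submodule.subset_span ⟨j, rfl⟩
  have stable (i : Fin 2) : ∀ m ∈ M, f (X i) * m ∈ M := by
    suffices M ≤ M.comap (LinearMap.mulLeft K (f (X i))) from fun m hm => this hm
    rw [Submodule.span_le, Set.range_subset_iff]
    intro j
    fin_cases i <;> fin_cases j
    · simpa using mem 1
    · simpa [← sq, h.sq_left] using M.smul_mem t₁ (mem 1)
    · simpa using mem 3
    · simpa [h.left_mul_mul] using M.smul_mem t₁ (mem 3)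
    · simpa using mem 2
    · simpa [mul_comm] using mem 3
    · simpa [← sq, h.sq_right] using M.add_mem (M.smul_mem t₂ (mem 2)) (M.smul_mem t₁₂ (mem 3))
    · simpa [h.right_mul_mul] using M.smul_mem (t₂ + t₁ * t₁₂) (mem 3)
  rw [eq_top_iff]
  rintro s -
  obtain ⟨p, rfl⟩ := hf s
  induction p using MvPolynomial.induction_on with
  | C a => simpa [Algebra.algebraMap_eq_smul_one] using M.smul_mem a (mem 0)
  | add p q hp hq => simpa using M.add_mem hp hq
  | mul_X p i hp => simpa [mul_comm] using stable i _ hp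

theorem linearIndependent_mk :
    LinearIndependent K ![1, Ideal.Quotient.mk (relIdeal t₁ t₂ t₁₂) (X 0),
      Ideal.Quotient.mk (relIdeal t₁ t₂ t₁₂) (X 1),
      Ideal.Quotient.mk (relIdeal t₁ t₂ t₁₂) (X 0) *
        Ideal.Quotient.mk (relIdeal t₁ t₂ t₁₂) (X 1)] := by
  nontriviality K
  exact (quadRels_adjoin₂ t₁ t₂ t₁₂).linearIndependent_mk (linearIndependent_adjoin₂ t₁ t₂ t₁₂)

variable (t₁ t₂ t₁₂)

noncomputable def relBasis :
    Module.Basis (Fin 4) K (MvPolynomial (Fin 2) K ⧸ relIdeal t₁ t₂ t₁₂) :=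
  .mk linearIndependent_mk (quadRels_mk.span_eq_top (Ideal.Quotient.mkₐ_surjective K _)).ge

theorem relBasis_apply (i : Fin 4) :
    relBasis t₁ t₂ t₁₂ i = ![1, Ideal.Quotient.mk (relIdeal t₁ t₂ t₁₂) (X 0),
      Ideal.Quotient.mk (relIdeal t₁ t₂ t₁₂) (X 1),
      Ideal.Quotient.mk (relIdeal t₁ t₂ t₁₂) (X 0) *
        Ideal.Quotient.mk (relIdeal t₁ t₂ t₁₂) (X 1)] i :=
  Module.Basis.mk_apply _ _ _

end Presentation

end Relations

theorem stmt18 {K : Type*} [CommRing K] (t₁ t₂ t₁₂ : K) :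
    let R := MvPolynomial (Fin 2) K
    let I : Ideal R := Ideal.span
      {MvPolynomial.X 0 ^ 2 - MvPolynomial.C t₁ * MvPolynomial.X 0,
       MvPolynomial.X 1 ^ 2 - MvPolynomial.C t₂ * MvPolynomial.X 1 -
         MvPolynomial.C t₁₂ * (MvPolynomial.X 0 * MvPolynomial.X 1)}
    let mk := Ideal.Quotient.mk I
    (∃ B : Module.Basis (Fin 4) K (R ⧸ I),
      B 0 = 1 ∧ B 1 = mk (MvPolynomial.X 0) ∧ B 2 = mk (MvPolynomial.X 1) ∧
        B 3 = mk (MvPolynomial.X 0 * MvPolynomial.X 1)) ∧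
    mk (MvPolynomial.X 1) * mk (MvPolynomial.X 0 * MvPolynomial.X 1) =
      (t₂ + t₁ * t₁₂) • mk (MvPolynomial.X 0 * MvPolynomial.X 1) ∧
    mk (MvPolynomial.X 0 * MvPolynomial.X 1) ^ 2 =
      (t₁ * t₂ + t₁ ^ 2 * t₁₂) • mk (MvPolynomial.X 0 * MvPolynomial.X 1) := by
  intro R I mk
  have h : QuadRels t₁ t₂ t₁₂ (mk (MvPolynomial.X 0)) (mk (MvPolynomial.X 1)) := quadRels_mk
  rw [map_mul mk]
  refine ⟨⟨relBasis t₁ t₂ t₁₂, ?_, ?_, ?_, ?_⟩, h.right_mul_mul, h.mul_sq⟩ <;>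
    exact relBasis_apply t₁ t₂ t₁₂ _
end
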